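/- Let α, β, γ, δ, κ be integers satisfying α, β, γ, δ, κ ≥ 0, α+β > 0, 0 < δ+γ ≤ β+κ, and κ ≤ min(α, γ), and set s = β−(γ−κ)−δ. Then there exists a Z2Z4-additive code 𝒞 of type (α,β;γ,δ;κ) with ker(Φ(𝒞)) = k for every k in the following set: {γ+δ, γ+δ+1, …, γ+2δ−2} ∪ {γ+2δ} if s ≥ 2; {γ+2δ−k̄ : k̄ even, 0 ≤ k̄ ≤ 2⌈(δ−1)/2⌉} if s = 1; and {γ+2δ} if s = 0. -/

import Mathlib

/-- The ambient group `Z2^α × Z4^β`, with componentwise ring structure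
(so `u * v` is the componentwise product). -/
abbrev Amb (α β : ℕ) := (Fin α → ZMod 2) × (Fin β → ZMod 4)

/-- The binary space `Z2^α × (Z2²)^β ≅ Z2^(α+2β)`. -/
abbrev Bin (α β : ℕ) := (Fin α → ZMod 2) × (Fin β → ZMod 2 × ZMod 2)

/-- The Gray map `φ : Z4 → Z2²` with `φ(0)=(0,0), φ(1)=(0,1), φ(2)=(1,1), φ(3)=(1,0)`. -/
def grayPair (y : ZMod 4) : ZMod 2 × ZMod 2 :=
  match y.val with
  | 0 => (0, 0)
  | 1 => (0, 1)
  | 2 => (1, 1)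
  | _ => (1, 0)

/-- The extended Gray map `Φ : Z2^α × Z4^β → Z2^(α+2β)`. -/
def Phi {α β : ℕ} (u : Amb α β) : Bin α β :=
  (u.1, fun i => grayPair (u.2 i))

/-- The kernel `K(C) = {x | x + C = C}` of a binary code. -/
def kernelK {α β : ℕ} (C : Set (Bin α β)) : Set (Bin α β) :=
  {x | (fun y => x + y) '' C = C}

/-- The rank of a binary code: the `Z2`-dimension of its linear span. -/
noncomputable def rankOf {α β : ℕ} (C : Set (Bin α β)) : ℕ :=
  Module.finrank (ZMod 2) (Submodule.span (ZMod 2) C)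

/-- The dimension of the kernel of a binary code. -/
noncomputable def kerDim {α β : ℕ} (C : Set (Bin α β)) : ℕ :=
  Module.finrank (ZMod 2) (Submodule.span (ZMod 2) (kernelK C))

/-- A `Z2Z4`-additive code `C ⊆ Z2^α × Z4^β` is of type `(α,β;γ,δ;κ)`:
`|C| = 2^(γ+2δ)`, the number of elements `x` with `2x = 0` is `2^(γ+δ)`, and `κ` is the
`Z2`-dimension of the projection onto the first `α` coordinates of `{x ∈ C | 2x = 0}`. -/
def IsTypeOf (α β γ δ κ : ℕ) (C : AddSubgroup (Amb α β)) : Prop :=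
  Nat.card C = 2 ^ (γ + 2 * δ) ∧
  Nat.card {x : Amb α β | x ∈ C ∧ 2 • x = 0} = 2 ^ (γ + δ) ∧
  Module.finrank (ZMod 2)
    (Submodule.span (ZMod 2) (Prod.fst '' {x : Amb α β | x ∈ C ∧ 2 • x = 0})) = κ

/-!
The Gray map satisfies `Φ(u) + Φ(v) = Φ(u + v + 2 u v)`, so `K(Φ(𝒞))` is the Gray image of
`{u ∈ 𝒞 | 2 u v ∈ 𝒞 for all v ∈ 𝒞}`, and `ker(Φ(𝒞))` is the binary logarithm of its size.

Take `𝒞` generated by `κ` binary unit vectors, `γ - κ` vectors `2 eⱼ` and `δ` vectors of order four,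
each of these with a coordinate of its own, and let the `s = β - (γ - κ) - δ` remaining quaternary
coordinates carry sums `∑_{i ∈ S} λᵢ` of the order-four parameters over supports `S` of even size.
Then `2 u v ∈ 𝒞` can only fail at the sum coordinates; testing against the order-four generators
shows that for `u` with parameters `λ` it holds iff `2 λᵢ = 0` for all `i` in the union `T` of the
supports (the values `2 λᵢ`, `i ∈ S`, all equal `2 ∑_S λ`, and an even number of them sum to `0`).
So `ker(Φ(𝒞)) = γ + 2δ - |T|`; an even `|T| = t` needs one support `{0, …, t-1}`, an odd `t ≥ 3`
the two supports `{0, …, t-2}` and `{0, t-1}`.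
-/

section GrayMap

variable {α β : ℕ}

theorem Phi_add_Phi (u v : Amb α β) : Phi u + Phi v = Phi (u + v + 2 • (u * v)) := by
  have two_nsmul_zmod2 : ∀ x : ZMod 2, 2 • x = 0 := by decide
  have grayPair_add : ∀ a b : ZMod 4, grayPair a + grayPair b = grayPair (a + b + 2 • (a * b)) := by
    decide
  refine Prod.ext (funext fun i => ?_) (funext fun j => grayPair_add (u.2 j) (v.2 j))
  change u.1 i + v.1 i = u.1 i + v.1 i + 2 • (u.1 i * v.1 i)
  rw [two_nsmul_zmod2, add_zero]

theorem Phi_injective : Function.Injective (Phi (α := α) (β := β)) := by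
  have grayPair_injective : Function.Injective grayPair := by decide
  intro u v h
  obtain ⟨h₁, h₂⟩ := Prod.ext_iff.1 h
  exact Prod.ext h₁ (funext fun j => grayPair_injective (congrFun h₂ j))

theorem Phi_zero : Phi (0 : Amb α β) = 0 := rfl

def grayKernel (C : AddSubgroup (Amb α β)) : Set (Amb α β) :=
  {u | u ∈ C ∧ ∀ v ∈ C, 2 • (u * v) ∈ C}

theorem mem_kernelK_iff {C : Set (Bin α β)} {x : Bin α β} :
    x ∈ kernelK C ↔ ∀ y ∈ C, x + y ∈ C := by
  refine ⟨fun hx y hy => hx ▸ Set.mem_image_of_mem _ hy, fun hx => ?_⟩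
  refine (Set.image_subset_iff.2 hx).antisymm fun y hy => ⟨x + y, hx y hy, ?_⟩
  rw [← add_assoc, ZModModule.add_self, zero_add]

theorem kernelK_image_Phi (C : AddSubgroup (Amb α β)) :
    kernelK (Phi '' C) = Phi '' grayKernel C := by
  ext x
  rw [mem_kernelK_iff]
  constructor
  · intro hx
    obtain ⟨u, hu, rfl⟩ : x ∈ Phi '' C := by simpa using hx _ ⟨0, C.zero_mem, Phi_zero⟩
    refine ⟨u, ⟨hu, fun v hv => ?_⟩, rfl⟩
    obtain ⟨w, hw, hwuv⟩ := hx _ ⟨v, hv, rfl⟩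
    rw [Phi_add_Phi] at hwuv
    have : u + v + 2 • (u * v) ∈ C := Phi_injective hwuv ▸ hw
    simpa using C.sub_mem this (C.add_mem hu hv)
  · rintro ⟨u, ⟨hu, hu2⟩, rfl⟩ _ ⟨v, hv, rfl⟩
    exact ⟨_, C.add_mem (C.add_mem hu hv) (hu2 v hv), (Phi_add_Phi u v).symm⟩

def kernelAddSubgroup (C : Set (Bin α β)) : AddSubgroup (Bin α β) where
  carrier := kernelK C
  zero_mem' := mem_kernelK_iff.2 fun y hy => by simpa using hy
  add_mem' {x z} hx hz := mem_kernelK_iff.2 fun y hy => by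
    rw [add_assoc]; exact mem_kernelK_iff.1 hx _ (mem_kernelK_iff.1 hz y hy)
  neg_mem' {x} hx := by simpa only [ZModModule.neg_eq_self] using hx

end GrayMap

theorem Submodule.finrank_eq_of_card_eq_two_pow {M : Type*} [AddCommGroup M] [Module (ZMod 2) M]
    (W : Submodule (ZMod 2) M) [Finite W] {n : ℕ} (h : Nat.card W = 2 ^ n) :
    Module.finrank (ZMod 2) W = n := by
  have := Fintype.ofFinite W
  rw [Nat.card_eq_fintype_card, Module.card_eq_pow_finrank (K := ZMod 2), ZMod.card] at h
  exact Nat.pow_right_injective le_rfl h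

theorem kerDim_Phi_image {α β n : ℕ} (C : AddSubgroup (Amb α β))
    (h : Nat.card (grayKernel C) = 2 ^ n) : kerDim (Phi '' (C : Set (Amb α β))) = n := by
  set K := kernelAddSubgroup (Phi '' (C : Set (Amb α β)))
  have hK : kernelK (Phi '' (C : Set (Amb α β))) = (AddSubgroup.toZModSubmodule 2 K : Set _) := rfl
  rw [kerDim, hK, Submodule.span_eq]
  refine Submodule.finrank_eq_of_card_eq_two_pow _ ?_
  change Nat.card (kernelK (Phi '' (C : Set (Amb α β)))) = _
  rw [kernelK_image_Phi, Nat.card_image_of_injective Phi_injective, h]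

section ZMod4

open Finset

variable {ι : Type*}

theorem two_mul_eq_zero_of_forall_mul_sum {S : Finset ι} (hS : Even #S) {l : ι → ZMod 4}
    (h : ∀ m : ι → ZMod 4, 2 * ((∑ i ∈ S, l i) * ∑ i ∈ S, m i) = ∑ i ∈ S, 2 * (l i * m i)) :
    ∀ i ∈ S, 2 * l i = 0 := by
  classical
  have hsingle : ∀ j ∈ S, 2 * ∑ i ∈ S, l i = 2 * l j := fun j hj => by
    simpa [Pi.single_apply, hj] using h (Pi.single j 1)
  have hzero : 2 * ∑ i ∈ S, l i = 0 := by
    obtain ⟨r, hr⟩ := hS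
    have hx : 2 * ∑ i ∈ S, l i + 2 * ∑ i ∈ S, l i = 0 := by
      rw [← two_mul, ← mul_assoc]; exact zero_mul _
    calc 2 * ∑ i ∈ S, l i = ∑ j ∈ S, 2 * l j := mul_sum ..
      _ = ∑ j ∈ S, 2 * ∑ i ∈ S, l i := sum_congr rfl fun j hj => (hsingle j hj).symm
      _ = 0 := by rw [sum_const, hr, add_nsmul, ← nsmul_add, hx, nsmul_zero]
  exact fun j hj => (hsingle j hj) ▸ hzero

theorem forall_mul_sum_of_two_mul_eq_zero {S : Finset ι} {l : ι → ZMod 4}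
    (h : ∀ i ∈ S, 2 * l i = 0) (m : ι → ZMod 4) :
    2 * ((∑ i ∈ S, l i) * ∑ i ∈ S, m i) = ∑ i ∈ S, 2 * (l i * m i) := by
  have h2 : 2 * ∑ i ∈ S, l i = 0 := by rw [mul_sum]; exact sum_eq_zero h
  rw [← mul_assoc, h2, zero_mul]
  exact (sum_eq_zero fun i hi => by rw [← mul_assoc, h i hi, zero_mul]).symm

theorem card_two_mul_eq_zero_on [Fintype ι] [DecidableEq ι] (T : Finset ι) :
    Nat.card {l : ι → ZMod 4 // ∀ i ∈ T, 2 * l i = 0} = 2 ^ (2 * Fintype.card ι - #T) := by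
  have hcard : ∀ i, Nat.card {z : ZMod 4 // i ∈ T → 2 * z = 0} = 2 ^ (if i ∈ T then 1 else 2) := by
    intro i
    by_cases hi : i ∈ T <;> simp only [hi, true_imp_iff, false_imp_iff, if_true, if_false]
    · rw [Nat.card_eq_fintype_card]; decide
    · simp
  rw [Nat.card_congr (Equiv.subtypePiEquivPi (p := fun i (z : ZMod 4) => i ∈ T → 2 * z = 0)),
    Nat.card_pi, prod_congr rfl fun i _ => hcard i, prod_pow_eq_pow_sum,
    sum_ite, sum_const, sum_const, filter_not, filter_mem_eq_inter, univ_inter, card_univ_sdiff]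
  have := T.card_le_univ
  congr 1
  simp only [smul_eq_mul]
  omega

end ZMod4

def twice (x : ZMod 2) : ZMod 4 := 2 * (x.val : ZMod 4)

theorem twice_add (x y : ZMod 2) : twice (x + y) = twice x + twice y := by
  revert x y; decide

theorem twice_eq_zero_iff {x : ZMod 2} : twice x = 0 ↔ x = 0 := by
  revert x; decide

theorem two_mul_twice_mul_twice (x y : ZMod 2) : 2 * (twice x * twice y) = 0 := by
  revert x y; decide

/-- The shape of a quaternary coordinate of the codes constructed below, as a function of the
parameters `(b, λ) ∈ Z2^g × Z4^δ`. -/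
inductive Column (g δ : ℕ)
  | double (i : Fin g)
  | info (i : Fin δ)
  | sum (S : Finset (Fin δ))

namespace Column

open Finset

variable {g δ : ℕ}

def eval : Column g δ → (Fin g → ZMod 2) → (Fin δ → ZMod 4) → ZMod 4
  | double i, b, _ => twice (b i)
  | info i, _, l => l i
  | sum S, _, l => ∑ i ∈ S, l i

def support : Column g δ → Finset (Fin δ)
  | sum S => S
  | _ => ∅

theorem eval_add (c : Column g δ) (b b' : Fin g → ZMod 2) (l l' : Fin δ → ZMod 4) :
    c.eval (b + b') (l + l') = c.eval b l + c.eval b' l' := by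
  cases c <;> simp [eval, twice_add, sum_add_distrib]

theorem eval_zero (c : Column g δ) : c.eval 0 0 = 0 := by
  cases c <;> simp [eval, twice_eq_zero_iff]

theorem two_mul_eval_mul_sub (c : Column g δ) (b b' : Fin g → ZMod 2) (l m : Fin δ → ZMod 4) :
    2 * (c.eval b l * c.eval b' m) - c.eval 0 (fun i => 2 * (l i * m i))
      = 2 * ((∑ i ∈ c.support, l i) * ∑ i ∈ c.support, m i)
        - ∑ i ∈ c.support, 2 * (l i * m i) := by
  cases c <;> simp [eval, support, two_mul_twice_mul_twice, twice_eq_zero_iff]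

end Column

structure IsSystematic {β g δ : ℕ} (L : Fin β → Column g δ) : Prop where
  double : ∀ i, ∃ j, L j = .double i
  info : ∀ i, ∃ j, L j = .info i

/-- Parameters `(a, b, λ) ∈ Z2^κ × Z2^g × Z4^δ` of a code of type `(α, β; κ + g, δ; κ)`. -/
abbrev Param (κ g δ : ℕ) := (Fin κ → ZMod 2) × (Fin g → ZMod 2) × (Fin δ → ZMod 4)

namespace Param

variable {κ g δ : ℕ}

def orderTwoOn (T : Finset (Fin δ)) : Set (Param κ g δ) := {d | ∀ i ∈ T, 2 * d.2.2 i = 0}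

theorem two_nsmul_eq_zero_iff {d : Param κ g δ} : 2 • d = 0 ↔ d ∈ orderTwoOn Finset.univ := by
  simp [orderTwoOn, Prod.ext_iff, funext_iff, two_mul, ZModModule.add_self]

theorem card_orderTwoOn (T : Finset (Fin δ)) :
    Nat.card (orderTwoOn T : Set (Param κ g δ)) = 2 ^ (κ + g + (2 * δ - T.card)) := by
  let e : orderTwoOn T ≃ (Fin κ → ZMod 2) × (Fin g → ZMod 2) ×
      {l : Fin δ → ZMod 4 // ∀ i ∈ T, 2 * l i = 0} :=
    { toFun := fun d => (d.1.1, d.1.2.1, ⟨d.1.2.2, d.2⟩)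
      invFun := fun p => ⟨(p.1, p.2.1, p.2.2.1), p.2.2.2⟩ }
  rw [Nat.card_congr e, Nat.card_prod, Nat.card_prod, card_two_mul_eq_zero_on]
  simp [pow_add, mul_assoc]

theorem card_eq : Nat.card (Param κ g δ) = 2 ^ (κ + g + 2 * δ) := by
  simp [pow_add, pow_mul, mul_assoc]

end Param

section CodeMap

open Finset

variable {α β κ g δ : ℕ} (hκα : κ ≤ α) (L : Fin β → Column g δ)

noncomputable def codeMap : Param κ g δ →+ Amb α β where
  toFun d := (Function.ExtendByZero.linearMap (ZMod 2) (Fin.castLE hκα) d.1,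
    fun j => (L j).eval d.2.1 d.2.2)
  map_zero' := Prod.ext (map_zero _) (funext fun j => (L j).eval_zero)
  map_add' _ _ := Prod.ext (map_add _ _ _) (funext fun j => (L j).eval_add _ _ _ _)

theorem codeMap_fst (d : Param κ g δ) :
    (codeMap hκα L d).1 = Function.ExtendByZero.linearMap (ZMod 2) (Fin.castLE hκα) d.1 := rfl

theorem codeMap_snd (d : Param κ g δ) (j : Fin β) :
    (codeMap hκα L d).2 j = (L j).eval d.2.1 d.2.2 := rfl

variable {L}

theorem eq_zero_of_codeMap (hL : IsSystematic L) {d : Param κ g δ} (h₁ : (codeMap hκα L d).1 = 0)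
    (h₂ : ∀ j, (L j).support = ∅ → (codeMap hκα L d).2 j = 0) : d = 0 := by
  obtain ⟨a, b, l⟩ := d
  have ha : a = 0 := Function.extend_injective (Fin.castLE_injective hκα) 0 <|
    h₁.trans (map_zero (Function.ExtendByZero.linearMap (ZMod 2) (Fin.castLE hκα))).symm
  have hb : b = 0 := funext fun i => by
    obtain ⟨j, hj⟩ := hL.double i
    simpa [codeMap_snd, hj, Column.eval, Column.support, twice_eq_zero_iff] using h₂ j
  have hl : l = 0 := funext fun i => by
    obtain ⟨j, hj⟩ := hL.info i
    simpa [codeMap_snd, hj, Column.eval, Column.support] using h₂ j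
  simp [ha, hb, hl]

theorem codeMap_injective (hL : IsSystematic L) : Function.Injective (codeMap hκα L) :=
  (injective_iff_map_eq_zero _).2 fun d hd =>
    eq_zero_of_codeMap hκα hL (by rw [hd]; rfl) fun j _ => by rw [hd]; rfl

/-- `2 (u * v)` differs from the codeword with parameters `(0, 0, 2 λ μ)` only in the columns with
non-empty support, and a codeword vanishing outside these columns is zero. -/
theorem two_nsmul_mul_mem_range_iff (hL : IsSystematic L) (d e : Param κ g δ) :
    2 • (codeMap hκα L d * codeMap hκα L e) ∈ (codeMap hκα L).range ↔
      ∀ j, 2 * ((∑ i ∈ (L j).support, d.2.2 i) * ∑ i ∈ (L j).support, e.2.2 i)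
        = ∑ i ∈ (L j).support, 2 * (d.2.2 i * e.2.2 i) := by
  set w := codeMap hκα L (0, 0, fun i => 2 * (d.2.2 i * e.2.2 i))
  set x := 2 • (codeMap hκα L d * codeMap hκα L e) - w
  have hx₁ : x.1 = 0 := by
    funext i
    simp [x, w, codeMap_fst, show (2 : ZMod 2) = 0 from rfl]
  have hx₂ : ∀ j, x.2 j = 2 * ((∑ i ∈ (L j).support, d.2.2 i) * ∑ i ∈ (L j).support, e.2.2 i)
        - ∑ i ∈ (L j).support, 2 * (d.2.2 i * e.2.2 i) := fun j => by
    rw [← Column.two_mul_eval_mul_sub _ d.2.1 e.2.1]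
    simp [x, w, codeMap_snd, nsmul_eq_mul]
  have hmem : 2 • (codeMap hκα L d * codeMap hκα L e) ∈ (codeMap hκα L).range ↔ x = 0 := by
    have hw : w ∈ (codeMap hκα L).range := ⟨_, rfl⟩
    refine ⟨fun h => ?_, fun hx => sub_eq_zero.1 hx ▸ hw⟩
    obtain ⟨d', hd'⟩ : x ∈ (codeMap hκα L).range := sub_mem h hw
    have hd'₀ : d' = 0 := eq_zero_of_codeMap hκα hL (by rw [hd']; exact hx₁)
      fun j hj => by rw [hd', hx₂, hj]; simp
    rw [← hd', hd'₀, map_zero]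
  rw [hmem, Prod.ext_iff, funext_iff (f := x.2)]
  simp only [hx₁, hx₂, Prod.fst_zero, Prod.snd_zero, Pi.zero_apply, sub_eq_zero, true_and]

theorem grayKernel_range_codeMap (hL : IsSystematic L) (heven : ∀ j, Even #(L j).support) :
    grayKernel (codeMap hκα L).range
      = codeMap hκα L '' Param.orderTwoOn (univ.biUnion fun j => (L j).support) := by
  ext u
  constructor
  · rintro ⟨⟨d, rfl⟩, hu⟩
    refine ⟨d, fun i hi => ?_, rfl⟩
    obtain ⟨j, -, hij⟩ := mem_biUnion.1 hi
    refine two_mul_eq_zero_of_forall_mul_sum (heven j) (fun m => ?_) i hij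
    exact (two_nsmul_mul_mem_range_iff hκα hL d (0, 0, m)).1 (hu _ ⟨_, rfl⟩) j
  · rintro ⟨d, hd, rfl⟩
    refine ⟨⟨d, rfl⟩, ?_⟩
    rintro _ ⟨e, rfl⟩
    refine (two_nsmul_mul_mem_range_iff hκα hL d e).2 fun j => ?_
    exact forall_mul_sum_of_two_mul_eq_zero (fun i hi => hd i (mem_biUnion.2 ⟨j, mem_univ _, hi⟩)) _

theorem orderTwo_range_codeMap (hL : IsSystematic L) :
    {x | x ∈ (codeMap hκα L).range ∧ 2 • x = 0} = codeMap hκα L '' Param.orderTwoOn univ := by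
  ext x
  constructor
  · rintro ⟨⟨d, rfl⟩, hd⟩
    refine ⟨d, Param.two_nsmul_eq_zero_iff.1 ?_, rfl⟩
    exact codeMap_injective hκα hL (by rwa [map_nsmul, map_zero])
  · rintro ⟨d, hd, rfl⟩
    exact ⟨⟨d, rfl⟩, by rw [← map_nsmul, Param.two_nsmul_eq_zero_iff.2 hd, map_zero]⟩

theorem isTypeOf_range_codeMap (hL : IsSystematic L) :
    IsTypeOf α β (κ + g) δ κ (codeMap hκα L).range := by
  have hinj := codeMap_injective hκα hL
  refine ⟨?_, ?_, ?_⟩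
  · rw [← Param.card_eq]
    exact Nat.card_congr (AddMonoidHom.ofInjective hinj).toEquiv.symm
  · rw [orderTwo_range_codeMap hκα hL, Nat.card_image_of_injective hinj,
      Param.card_orderTwoOn, card_univ, Fintype.card_fin]
    congr 1
    omega
  · have hproj : Prod.fst '' (codeMap hκα L '' Param.orderTwoOn univ)
        = LinearMap.range (Function.ExtendByZero.linearMap (ZMod 2) (Fin.castLE hκα)) := by
      ext a
      constructor
      · rintro ⟨_, ⟨d, -, rfl⟩, rfl⟩
        exact ⟨d.1, rfl⟩
      · rintro ⟨a, rfl⟩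
        exact ⟨_, ⟨(a, 0, 0), fun i _ => mul_zero 2, rfl⟩, rfl⟩
    rw [orderTwo_range_codeMap hκα hL, hproj, Submodule.span_eq,
      LinearMap.finrank_range_of_inj (Function.extend_injective (Fin.castLE_injective hκα) 0),
      Module.finrank_fin_fun]

theorem kerDim_range_codeMap (hL : IsSystematic L) (heven : ∀ j, Even #(L j).support) :
    kerDim (Phi '' ((codeMap hκα L).range : Set (Amb α β)))
      = κ + g + (2 * δ - #(univ.biUnion fun j => (L j).support)) := by
  refine kerDim_Phi_image _ ?_
  rw [grayKernel_range_codeMap hκα hL heven,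
    Nat.card_image_of_injective (codeMap_injective hκα hL), Param.card_orderTwoOn]

end CodeMap

section Layout

open Finset

variable {β g δ m : ℕ}

def blockLayout (S : Fin m → Finset (Fin δ)) (j : Fin β) : Column g δ :=
  if h : j.val < g then .double ⟨j, h⟩
  else if h' : j.val - g < δ then .info ⟨j - g, h'⟩
  else if h'' : j.val - g - δ < m then .sum (S ⟨j - g - δ, h''⟩)
  else .sum ∅

variable (S : Fin m → Finset (Fin δ))

theorem isSystematic_blockLayout (hβ : g + δ + m ≤ β) :
    IsSystematic (blockLayout (β := β) (g := g) S) where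
  double i := ⟨⟨i, by omega⟩, by simp [blockLayout]⟩
  info i := ⟨⟨g + i, by omega⟩, by simp [blockLayout]⟩

theorem even_support_blockLayout (hS : ∀ c, Even #(S c)) (j : Fin β) :
    Even #(blockLayout (g := g) S j).support := by
  unfold blockLayout
  split_ifs <;> simp [Column.support, hS]

theorem biUnion_support_blockLayout (hβ : g + δ + m ≤ β) :
    univ.biUnion (fun j : Fin β => (blockLayout (g := g) S j).support) = univ.biUnion S := by
  ext i
  simp only [mem_biUnion, mem_univ, true_and]
  constructor
  · rintro ⟨j, hj⟩
    unfold blockLayout at hj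
    split_ifs at hj <;> first | exact ⟨_, hj⟩ | simp [Column.support] at hj
  · rintro ⟨c, hc⟩
    refine ⟨⟨g + (δ + c), by omega⟩, ?_⟩
    simpa [blockLayout, Column.support] using hc

end Layout

open Finset in
theorem exists_code_of_supports {α β κ g δ m : ℕ} (hκα : κ ≤ α) (hβ : g + δ + m ≤ β)
    (S : Fin m → Finset (Fin δ)) (hS : ∀ c, Even #(S c)) :
    ∃ C : AddSubgroup (Amb α β), IsTypeOf α β (κ + g) δ κ C ∧
      kerDim (Phi '' (C : Set (Amb α β))) = κ + g + (2 * δ - #(univ.biUnion S)) := by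
  have hL := isSystematic_blockLayout S hβ
  refine ⟨_, isTypeOf_range_codeMap hκα hL, ?_⟩
  rw [kerDim_range_codeMap hκα hL (even_support_blockLayout S hS), biUnion_support_blockLayout S hβ]

open Finset in
theorem exists_even_supports {δ t s : ℕ} (htδ : t ≤ δ) (ht1 : t ≠ 1)
    (hs : t = 0 ∨ (Even t ∧ 1 ≤ s) ∨ 2 ≤ s) :
    ∃ m ≤ s, ∃ S : Fin m → Finset (Fin δ), (∀ c, Even #(S c)) ∧ #(univ.biUnion S) = t := by
  rcases Nat.eq_zero_or_pos t with rfl | htpos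
  · exact ⟨0, Nat.zero_le _, Fin.elim0, fun c => c.elim0, by simp⟩
  rcases Nat.even_or_odd t with hev | hodd
  · refine ⟨1, by grind, ![({i | (i : ℕ) < t} : Finset (Fin δ))], fun c => ?_, ?_⟩ <;>
      simp [Fin.card_filter_val_lt, min_eq_right htδ, hev]
  · obtain ⟨r, rfl⟩ := hodd
    let A : Finset (Fin δ) := {i | (i : ℕ) < 2 * r}
    let B : Finset (Fin δ) := {⟨0, by omega⟩, ⟨2 * r, by omega⟩}
    have hB : #B = 2 := card_pair (by simp [Fin.ext_iff]; omega)
    have hAB : univ.biUnion ![A, B] = ({i | (i : ℕ) < 2 * r + 1} : Finset (Fin δ)) := by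
      ext i
      simp [A, B, Fin.exists_fin_two, Fin.ext_iff]
      omega
    refine ⟨2, by grind, ![A, B], fun c => ?_, ?_⟩
    · fin_cases c
      · simp [A, Fin.card_filter_val_lt, min_eq_right (show 2 * r ≤ δ by omega)]
      · simp [hB]
    · rw [hAB, Fin.card_filter_val_lt, min_eq_right htδ]

theorem exists_code_with_kernel_dim_general (α β γ δ κ k : ℕ)
    (h3 : δ + γ ≤ β + κ) (h4 : κ ≤ min α γ)
    (hk : (2 ≤ β - (γ - κ) - δ ∧
            ((γ + δ ≤ k ∧ k + 2 ≤ γ + 2 * δ) ∨ k = γ + 2 * δ)) ∨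
          (β - (γ - κ) - δ = 1 ∧
            ∃ kb : ℕ, Even kb ∧ kb ≤ 2 * (δ / 2) ∧ k + kb = γ + 2 * δ) ∨
          (β - (γ - κ) - δ = 0 ∧ k = γ + 2 * δ)) :
    ∃ C : AddSubgroup (Amb α β), IsTypeOf α β γ δ κ C ∧
      kerDim (Phi '' (C : Set (Amb α β))) = k := by
  obtain ⟨hκα, hκγ⟩ := le_min_iff.1 h4
  obtain ⟨t, htδ, ht1, hs, rfl⟩ : ∃ t ≤ δ, t ≠ 1 ∧
      (t = 0 ∨ (Even t ∧ 1 ≤ β - (γ - κ) - δ) ∨ 2 ≤ β - (γ - κ) - δ) ∧ k = γ + 2 * δ - t := by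
    rcases hk with ⟨hs, ⟨hk₁, hk₂⟩ | rfl⟩ | ⟨hs, kb, hkb, hkbδ, hkkb⟩ | ⟨-, rfl⟩
    · exact ⟨γ + 2 * δ - k, by omega, by omega, .inr (.inr hs), by omega⟩
    · exact ⟨0, by omega, by omega, .inl rfl, by omega⟩
    · exact ⟨kb, by omega, by rintro rfl; exact Nat.not_even_one hkb, .inr (.inl ⟨hkb, by omega⟩),
        by omega⟩
    · exact ⟨0, by omega, by omega, .inl rfl, by omega⟩
  obtain ⟨m, hm, S, hS, hcard⟩ := exists_even_supports htδ ht1 hs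
  obtain ⟨C, hC, hker⟩ :=
    exists_code_of_supports (g := γ - κ) hκα (by omega : γ - κ + δ + m ≤ β) S hS
  rw [Nat.add_sub_cancel' hκγ] at hC hker
  exact ⟨C, hC, by omega⟩

/-- for every admissible kernel dimension `k` (depending on
`s = β−(γ−κ)−δ`), there is a `Z2Z4`-additive code of type `(α,β;γ,δ;κ)` whose Gray image
has kernel dimension `k`. -/
theorem exists_code_with_kernel_dim (α β γ δ κ k : ℕ)
    (h1 : 0 < α + β) (h2 : 0 < δ + γ) (h3 : δ + γ ≤ β + κ) (h4 : κ ≤ min α γ)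
    (hk : (2 ≤ β - (γ - κ) - δ ∧
            ((γ + δ ≤ k ∧ k + 2 ≤ γ + 2 * δ) ∨ k = γ + 2 * δ)) ∨
          (β - (γ - κ) - δ = 1 ∧
            ∃ kb : ℕ, Even kb ∧ kb ≤ 2 * (δ / 2) ∧ k + kb = γ + 2 * δ) ∨
          (β - (γ - κ) - δ = 0 ∧ k = γ + 2 * δ)) :
    ∃ C : AddSubgroup (Amb α β), IsTypeOf α β γ δ κ C ∧
      kerDim (Phi '' (C : Set (Amb α β))) = k :=
  exists_code_with_kernel_dim_general α β γ δ κ k h3 h4 hk
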